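/- arXiv:2201.08462 — 2 statements merged into one kernel-verified Lean document; each statement's English description precedes it below -/
import Mathlib

section
/- Deterministic version of Lemma 7 (small-noise Riemann–Stieltjes sum convergence): Let $H \in (0,1)$, let $g : [0,T] \to \mathbb{R}$ be a path with finite $(1/H)$-variation along dyadic partitions in the sense that $\sup_n (\sum_{k=0}^{n-1} |g(t_{k+1}) - g(t_k)|^{1/H})^H =: V < \infty$ (with $t_k = kT/n$), and $\lambda'$-Hölder continuous for some $\lambda' \in (1-\lambda, 1)$ matching $\lambda \in (1-H,1)$ with $\lambda + \lambda' > 1$. Let $f : \mathbb{R} \times \Theta \to \mathbb{R}$ satisfy $\sup_\theta |f(x,\theta) - f(y,\theta)| \le c|x-y|$, let $x : [0,T] \to \mathbb{R}$ be Lipschitz, and let $X^\varepsilon : [0,T] \to \mathbb{R}$ satisfy $\sup_t |X^\varepsilon_t - x_t| \le K\varepsilon$. If $\varepsilon n^{1-H} \to 0$ as $n \to \infty$, $\varepsilon \downarrow 0$, then $\sup_{\theta} \left| \sum_{k=0}^{n-1} f(X^\varepsilon_{t_k},\theta)(g(t_{k+1}) - g(t_k)) - \int_0^T f(x_s,\theta)\,dg(s)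 \right| \to 0$. -/
open Filter

/-- `f` is `l`-Hölder continuous on `[a,b]` with constant `C`. -/
def HolderOnI (f : ℝ → ℝ) (l a b C : ℝ) : Prop :=
  ∀ s ∈ Set.Icc a b, ∀ t ∈ Set.Icc a b, |f t - f s| ≤ C * |t - s| ^ l

/-- `I` is the Young (Riemann–Stieltjes) integral `∫_a^b f dg`, defined as the limit of
left Riemann–Stieltjes sums along uniform partitions. -/
def IsRSIntegral (f g : ℝ → ℝ) (a b I : ℝ) : Prop :=
  Tendsto (fun n : ℕ => ∑ k ∈ Finset.range n,
      f (a + (k : ℝ) * (b - a) / n) *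
        (g (a + ((k : ℝ) + 1) * (b - a) / n) - g (a + (k : ℝ) * (b - a) / n)))
    atTop (nhds I)

/-!
Write `t_k = kT/n` and `Δg_k = g(t_{k+1}) - g(t_k)`. The error splits as
`∑ (f(X^ε_{t_k}) - f(x_{t_k})) Δg_k` plus the distance of `∑ f(x_{t_k}) Δg_k` from its limit.
The first part is at most `c K ε ∑ |Δg_k| ≤ c K ε n^{1-H} V` by the discrete Hölder inequality.
For the second, halving the mesh changes a Riemann–Stieltjes sum of an `α`-Hölder integrand
against a `β`-Hölder integrator by at most `M C ((b-a)/2)^{α+β} n^{1-α-β}`; when `α + β > 1`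
these changes along `n, 2n, 4n, …` form a geometric series, so the sum is within
`O(n^{1-α-β})` of its limit. Here `α = 1` and `β = λ'`.
-/

open Finset Topology

/-- `IsRSIntegral φ g a b I` unfolds to `Tendsto (rsSum φ g a b) atTop (𝓝 I)`. -/
noncomputable def rsSum (φ g : ℝ → ℝ) (a b : ℝ) (n : ℕ) : ℝ :=
  ∑ k ∈ range n, φ (a + (k : ℝ) * (b - a) / n) *
    (g (a + ((k : ℝ) + 1) * (b - a) / n) - g (a + (k : ℝ) * (b - a) / n))

theorem sum_range_two_mul {M : Type*} [AddCommMonoid M] (u : ℕ → M) (n : ℕ) :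
    ∑ j ∈ range (2 * n), u j = ∑ k ∈ range n, (u (2 * k) + u (2 * k + 1)) := by
  induction n with
  | zero => simp
  | succ n ih =>
    rw [show 2 * (n + 1) = 2 * n + 1 + 1 by ring, sum_range_succ, sum_range_succ, ih,
      sum_range_succ, add_assoc]

theorem grid_mem_Icc {a b : ℝ} (hab : a ≤ b) {n k : ℕ} (hk : k ≤ n) :
    a + (k : ℝ) * (b - a) / n ∈ Set.Icc a b := by
  have hba : 0 ≤ b - a := sub_nonneg.2 hab
  have hle : (k : ℝ) * (b - a) / n ≤ b - a :=
    div_le_of_le_mul₀ (Nat.cast_nonneg n) hba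
      (by rw [mul_comm (b - a)]; exact mul_le_mul_of_nonneg_right (by exact_mod_cast hk) hba)
  exact ⟨le_add_of_nonneg_right (div_nonneg (mul_nonneg k.cast_nonneg hba) n.cast_nonneg),
    by linarith⟩

theorem abs_riemannStieltjes_refine_le {φ g : ℝ → ℝ} {a b M C α β s u t : ℝ}
    (hφ : HolderOnI φ α a b M) (hg : HolderOnI g β a b C)
    (hs : s ∈ Set.Icc a b) (hu : u ∈ Set.Icc a b) (ht : t ∈ Set.Icc a b) :
    |φ s * (g t - g s) - (φ s * (g u - g s) + φ u * (g t - g u))|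
      ≤ M * |s - u| ^ α * (C * |t - u| ^ β) := by
  rw [show φ s * (g t - g s) - (φ s * (g u - g s) + φ u * (g t - g u))
      = (φ s - φ u) * (g t - g u) by ring, abs_mul]
  have hφsu := hφ u hu s hs
  exact mul_le_mul hφsu (hg u hu t ht) (abs_nonneg _) ((abs_nonneg _).trans hφsu)

theorem abs_rsSum_sub_rsSum_two_mul_le {φ g : ℝ → ℝ} {a b M C α β : ℝ} (hab : a < b)
    (hφ : HolderOnI φ α a b M) (hg : HolderOnI g β a b C) {n : ℕ} (hn : 1 ≤ n) :
    |rsSum φ g a b n - rsSum φ g a b (2 * n)|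
      ≤ M * C * ((b - a) / 2) ^ (α + β) * (n : ℝ) ^ (1 - (α + β)) := by
  have hn0 : (0 : ℝ) < n := by exact_mod_cast hn
  set d := (b - a) / (2 * n) with hd
  have hd0 : 0 < d := div_pos (sub_pos.2 hab) (by positivity)
  rw [rsSum, rsSum, sum_range_two_mul, ← sum_sub_distrib]
  refine (abs_sum_le_sum_abs _ _).trans
    ((sum_le_sum (g := fun _ => M * d ^ α * (C * d ^ β)) fun k hk => ?_).trans_eq ?_)
  · have hk : k < n := mem_range.1 hk
    set s := a + (k : ℝ) * (b - a) / n
    set u := a + (2 * (k : ℝ) + 1) * (b - a) / (2 * n)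
    set t := a + ((k : ℝ) + 1) * (b - a) / n
    have hsu : |s - u| = d := by
      rw [show s - u = -d by simp only [s, u, d]; field_simp; ring, abs_neg, abs_of_pos hd0]
    have htu : |t - u| = d := by
      rw [show t - u = d by simp only [t, u, d]; field_simp; ring, abs_of_pos hd0]
    have hs : s ∈ Set.Icc a b := grid_mem_Icc hab.le hk.le
    have ht : t ∈ Set.Icc a b := by
      have := grid_mem_Icc hab.le (Nat.succ_le_of_lt hk); push_cast at this; exact this
    have hu : u ∈ Set.Icc a b := by
      have := grid_mem_Icc hab.le (show 2 * k + 1 ≤ 2 * n by omega); push_cast at this; exact this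
    push_cast
    rw [show a + 2 * (k : ℝ) * (b - a) / (2 * n) = s by simp only [s]; field_simp,
      show a + (2 * (k : ℝ) + 1 + 1) * (b - a) / (2 * n) = t by simp only [t]; field_simp; ring]
    simpa only [hsu, htu] using abs_riemannStieltjes_refine_le hφ hg hs hu ht
  · rw [sum_const, card_range, nsmul_eq_mul,
      show (n : ℝ) * (M * d ^ α * (C * d ^ β)) = M * C * (n * (d ^ α * d ^ β)) by ring,
      ← Real.rpow_add hd0, hd, ← div_div, Real.div_rpow (by linarith) hn0.le,
      Real.rpow_sub hn0, Real.rpow_one]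
    ring

theorem abs_sub_le_of_tendsto_of_abs_sub_two_mul_le {u : ℕ → ℝ} {l C q : ℝ}
    (hu : Tendsto u atTop (𝓝 l)) (hq : q < 0)
    (h : ∀ m : ℕ, 1 ≤ m → |u m - u (2 * m)| ≤ C * (m : ℝ) ^ q) {n : ℕ} (hn : 1 ≤ n) :
    |u n - l| ≤ C * (1 - 2 ^ q)⁻¹ * (n : ℝ) ^ q := by
  have hsub : Tendsto (fun J : ℕ => u (2 ^ J * n)) atTop (𝓝 l) :=
    hu.comp (tendsto_atTop_mono (fun J => Nat.le_mul_of_pos_right _ hn)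
      (tendsto_pow_atTop_atTop_of_one_lt one_lt_two))
  have hstep : ∀ J : ℕ, dist (u (2 ^ J * n)) (u (2 ^ (J + 1) * n)) ≤ C * n ^ q * (2 ^ q) ^ J := by
    intro J
    rw [Real.dist_eq, pow_succ', mul_assoc]
    refine (h _ (Nat.one_le_iff_ne_zero.2 (by positivity))).trans_eq ?_
    push_cast
    rw [Real.mul_rpow (by positivity) (Nat.cast_nonneg n), ← Real.rpow_pow_comm zero_le_two]
    ring
  have := dist_le_of_le_geometric_of_tendsto₀ _ _
    (Real.rpow_lt_one_of_one_lt_of_neg one_lt_two hq) hstep hsub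
  rw [Real.dist_eq] at this
  simpa [div_eq_mul_inv, mul_right_comm] using this

theorem abs_rsSum_sub_le_of_isRSIntegral {φ g : ℝ → ℝ} {a b M C α β I : ℝ} (hab : a < b)
    (hαβ : 1 < α + β) (hφ : HolderOnI φ α a b M) (hg : HolderOnI g β a b C)
    (hI : IsRSIntegral φ g a b I) {n : ℕ} (hn : 1 ≤ n) :
    |rsSum φ g a b n - I| ≤ M * C * ((b - a) / 2) ^ (α + β) * (1 - 2 ^ (1 - (α + β)))⁻¹
      * (n : ℝ) ^ (1 - (α + β)) :=
  abs_sub_le_of_tendsto_of_abs_sub_two_mul_le hI (by linarith)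
    (fun _ hm => abs_rsSum_sub_rsSum_two_mul_le hab hφ hg hm) hn

theorem sum_abs_le_card_rpow_mul_sum_abs_rpow {ι : Type*} (s : Finset ι) (a : ι → ℝ)
    {H : ℝ} (hH0 : 0 < H) (hH1 : H ≤ 1) :
    ∑ i ∈ s, |a i| ≤ (#s : ℝ) ^ (1 - H) * (∑ i ∈ s, |a i| ^ (1 / H)) ^ H := by
  have h := Real.inner_le_weight_mul_Lp_of_nonneg s (p := 1 / H) (by rw [le_div_iff₀ hH0]; linarith)
    (fun _ => 1) (fun i => |a i|) (fun _ => zero_le_one) (fun i => abs_nonneg (a i))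
  simpa only [one_mul, sum_const, nsmul_eq_mul, mul_one, one_div, inv_inv] using h

theorem abs_rsSum_sub_rsSum_le {φ ψ g : ℝ → ℝ} {a b δ H : ℝ} (hab : a ≤ b)
    (hH0 : 0 < H) (hH1 : H ≤ 1) (hδ : 0 ≤ δ) (hφψ : ∀ t ∈ Set.Icc a b, |φ t - ψ t| ≤ δ) (n : ℕ) :
    |rsSum φ g a b n - rsSum ψ g a b n| ≤ δ * (n : ℝ) ^ (1 - H) *
      (∑ k ∈ range n, |g (a + ((k : ℝ) + 1) * (b - a) / n) - g (a + (k : ℝ) * (b - a) / n)|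
        ^ (1 / H)) ^ H := by
  rw [rsSum, rsSum, ← sum_sub_distrib, mul_assoc]
  calc _ ≤ ∑ k ∈ range n,
        δ * |g (a + ((k : ℝ) + 1) * (b - a) / n) - g (a + (k : ℝ) * (b - a) / n)| := by
        refine (abs_sum_le_sum_abs _ _).trans (sum_le_sum fun k hk => ?_)
        rw [← sub_mul, abs_mul]
        exact mul_le_mul_of_nonneg_right
          (hφψ _ (grid_mem_Icc hab (mem_range.1 hk).le)) (abs_nonneg _)
    _ ≤ _ := by
        rw [← mul_sum]
        refine mul_le_mul_of_nonneg_left ?_ hδ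
        simpa using sum_abs_le_card_rpow_mul_sum_abs_rpow (range n) _ hH0 hH1

theorem holderOnI_one_comp {f x : ℝ → ℝ} {c L : ℝ} (a b : ℝ) (hc : 0 ≤ c)
    (hf : ∀ y z, |f y - f z| ≤ c * |y - z|) (hx : ∀ s t, |x s - x t| ≤ L * |s - t|) :
    HolderOnI (f ∘ x) 1 a b (c * L) := fun s _ t _ => by
  rw [Real.rpow_one, mul_assoc]
  exact (hf _ _).trans (mul_le_mul_of_nonneg_left (hx t s) hc)

/-- Deterministic small-noise Riemann–Stieltjes sum convergence (Lemma 7):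
if `ε n^{1-H} → 0` then
`sup_θ |∑_k f(X^ε_{t_k},θ)(g(t_{k+1}) - g(t_k)) - ∫_0^T f(x_s,θ) dg(s)| → 0`. -/
theorem small_noise_rs_sum_convergence {Θ : Type*} [Nonempty Θ]
    (H lam lam' T c L K V Cg : ℝ)
    (hH : H ∈ Set.Ioo (0:ℝ) 1) (hT : 0 < T)
    (hlam : lam ∈ Set.Ioo (1 - H) 1) (hlam' : lam' ∈ Set.Ioo (1 - lam) 1)
    (g : ℝ → ℝ)
    (hV : ∀ n : ℕ, 1 ≤ n →
      (∑ k ∈ Finset.range n,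
          |g (((k : ℝ) + 1) * T / n) - g ((k : ℝ) * T / n)| ^ (1 / H)) ^ H ≤ V)
    (hg : HolderOnI g lam' 0 T Cg)
    (f : ℝ → Θ → ℝ) (hf : ∀ (θ : Θ) (y z : ℝ), |f y θ - f z θ| ≤ c * |y - z|)
    (x : ℝ → ℝ) (hx : ∀ s t : ℝ, |x s - x t| ≤ L * |s - t|)
    (X : ℝ → ℝ → ℝ) (hX : ∀ ε > (0:ℝ), ∀ t ∈ Set.Icc (0:ℝ) T, |X ε t - x t| ≤ K * ε)
    (I : Θ → ℝ) (hI : ∀ θ, IsRSIntegral (fun s => f (x s) θ) g 0 T (I θ)) :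
    ∀ (ns : ℕ → ℕ) (es : ℕ → ℝ), Tendsto ns atTop atTop →
      Tendsto es atTop (nhdsWithin 0 (Set.Ioi 0)) →
      Tendsto (fun j => es j * (ns j : ℝ) ^ (1 - H)) atTop (nhds 0) →
      Tendsto (fun j => ⨆ θ : Θ, |∑ k ∈ Finset.range (ns j),
          f (X (es j) ((k : ℝ) * T / ns j)) θ
            * (g (((k : ℝ) + 1) * T / ns j) - g ((k : ℝ) * T / ns j)) - I θ|)
        atTop (nhds 0) := by
  intro ns es hns hes hprod
  obtain ⟨θ₀⟩ := ‹Nonempty Θ›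
  have hc : 0 ≤ c := (abs_nonneg _).trans (by simpa using hf θ₀ 0 1)
  have hK : 0 ≤ K := by linarith [(abs_nonneg _).trans (hX 1 one_pos 0 ⟨le_rfl, hT.le⟩)]
  have hlam'0 : 0 < lam' := by linarith [hlam.2, hlam'.1]
  set B := c * L * Cg * (T / 2) ^ (1 + lam') * (1 - 2 ^ (-lam'))⁻¹
  have hbound (n : ℕ) (hn : 1 ≤ n) (ε : ℝ) (hε : 0 < ε) (θ : Θ) :
      |rsSum (fun s => f (X ε s) θ) g 0 T n - I θ|
        ≤ c * (K * ε) * (n : ℝ) ^ (1 - H) * V + B * (n : ℝ) ^ (-lam') := by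
    have hnoise := abs_rsSum_sub_rsSum_le (g := g) hT.le hH.1 hH.2.le (by positivity)
      (fun t ht => (hf θ _ _).trans (mul_le_mul_of_nonneg_left (hX ε hε t ht) hc)) n
    have hyoung := abs_rsSum_sub_le_of_isRSIntegral hT (by linarith)
      (holderOnI_one_comp 0 T hc (hf θ) hx) hg (hI θ) hn
    simp only [zero_add, sub_zero, show (1 : ℝ) - (1 + lam') = -lam' by ring] at hnoise hyoung
    refine (abs_sub_le _ (rsSum (fun s => f (x s) θ) g 0 T n) _).trans (add_le_add ?_ hyoung)
    exact hnoise.trans (mul_le_mul_of_nonneg_left (hV n hn) (by positivity))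
  have hlim : Tendsto (fun j => c * (K * es j) * (ns j : ℝ) ^ (1 - H) * V
      + B * (ns j : ℝ) ^ (-lam')) atTop (𝓝 0) := by
    have := (hprod.const_mul (c * K * V)).add (((tendsto_rpow_neg_atTop hlam'0).comp
      (tendsto_natCast_atTop_atTop.comp hns)).const_mul B)
    simp only [mul_zero, add_zero] at this
    exact this.congr fun j => by simp only [Function.comp_apply]; ring
  refine squeeze_zero' (Eventually.of_forall fun j => Real.iSup_nonneg fun θ => abs_nonneg _)
    ?_ hlim
  filter_upwards [hns.eventually_ge_atTop 1, (tendsto_nhdsWithin_iff.mp hes).2] with j hn hε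
  refine ciSup_le fun θ => ?_
  simpa only [rsSum, zero_add, sub_zero] using hbound (ns j) hn (es j) hε θ
end

section
/- Hölder-norm control of the composed difference (key step of Lemma 8): Let $H > 1/2$, $\lambda \in (1/2, H)$. Let $f \in C^{1}$ in $x$ with $\sup_\theta|f(x,\theta)-f(y,\theta)| \le c|x-y|$ and $\sup_\theta |\partial_x f(x,\theta) - \partial_x f(y,\theta)| \le c|x-y|$. Let $x : [0,T] \to \mathbb{R}$ solve $\dot x = b(x,\theta_0)$ and $X^\varepsilon_t = x_0 + \int_0^t b(X^\varepsilon_s,\theta_0)ds + \varepsilon g_t$ with $g$ $\lambda$-Hölder. Then $\sup_{\theta \in \Theta} \| f(X^\varepsilon_\cdot,\theta) - f(x_\cdot,\theta) \|_{\lambda;[0,T]} \to 0$ as $\varepsilon \downarrow 0$, where $\|\cdot\|_{\lambda}$ is the $\lambda$-Hölder seminorm. -/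
/-!
By Grönwall's inequality, `X ε - x`, whose integral equation is driven by `ε g`, is `O(ε)` on
`[0, T]`; so its increments are `O(ε (t - s) ^ λ)`, while those of `x` are `O(t - s)`. For `F`
with bounded, Lipschitz derivative, the mean value inequality along the segments from
`(X ε s, x s)` to `(X ε t, x t)` bounds the increment of `F ∘ X ε - F ∘ x` by
`Lip(F') · sup |X ε - x| · |ΔX ε| + sup |F'| · |Δ(X ε - x)|`. Hence the `λ`-Hölder seminorm of
`f (X ε ·) θ - f (x ·) θ` is `O(ε)` uniformly in `θ`.
-/

open Filter Set MeasureTheory Real Topology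

/-- The `l`-Hölder seminorm of `u` on `[a,b]`. -/
noncomputable def holderSemi (l a b : ℝ) (u : ℝ → ℝ) : ℝ :=
  sSup {y | ∃ s t : ℝ, a ≤ s ∧ s < t ∧ t ≤ b ∧ y = |u t - u s| / (t - s) ^ l}

theorem holderSemi_nonneg (l a b : ℝ) (u : ℝ → ℝ) : 0 ≤ holderSemi l a b u := by
  refine Real.sSup_nonneg fun y ⟨s, t, _, hst, _, hy⟩ => hy ▸ ?_
  exact div_nonneg (abs_nonneg _) (rpow_nonneg (sub_pos.2 hst).le l)

theorem holderSemi_le {l a b C : ℝ} {u : ℝ → ℝ} (hab : a < b)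
    (h : ∀ s t, a ≤ s → s < t → t ≤ b → |u t - u s| ≤ C * (t - s) ^ l) :
    holderSemi l a b u ≤ C := by
  refine csSup_le ⟨_, a, b, le_rfl, hab, le_rfl, rfl⟩ fun y ⟨s, t, hs, hst, htb, hy⟩ => ?_
  rw [hy, div_le_iff₀ (rpow_pos_of_pos (sub_pos.2 hst) l)]
  exact h s t hs hst htb

theorem mul_le_mul_rpow_one_sub_mul_rpow {A h T l : ℝ} (hA : 0 ≤ A) (h0 : 0 ≤ h) (hT : h ≤ T)
    (hl : l ≤ 1) : A * h ≤ A * T ^ (1 - l) * h ^ l := by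
  calc A * h = A * (h ^ (1 - l) * h ^ l) := by
        rw [← rpow_add' h0 (by norm_num), sub_add_cancel, rpow_one]
    _ ≤ A * (T ^ (1 - l) * h ^ l) := by gcongr
    _ = A * T ^ (1 - l) * h ^ l := by ring

theorem abs_le_add_mul_rpow_of_holder {g : ℝ → ℝ} {C l T : ℝ} (hC : 0 ≤ C) (hl : 0 ≤ l)
    (hg : ∀ s ∈ Icc 0 T, ∀ t ∈ Icc 0 T, |g t - g s| ≤ C * |t - s| ^ l) :
    ∀ t ∈ Icc 0 T, |g t| ≤ |g 0| + C * T ^ l := fun t ht => by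
  have hincr := hg 0 ⟨le_rfl, ht.1.trans ht.2⟩ t ht
  rw [sub_zero, abs_of_nonneg ht.1] at hincr
  calc |g t| ≤ |g 0| + |g t - g 0| := by
        linarith [abs_sub_abs_le_abs_sub (g t) (g 0)]
    _ ≤ |g 0| + C * T ^ l := by gcongr; exact hincr.trans (by gcongr; exacts [ht.1, ht.2])

theorem nonneg_of_abs_sub_le_mul {F : ℝ → ℝ} {c : ℝ} (h : ∀ y z, |F y - F z| ≤ c * |y - z|) :
    0 ≤ c := by
  simpa using (abs_nonneg _).trans (h 1 0)

theorem abs_le_of_hasDerivAt_of_abs_sub_le {F : ℝ → ℝ} {F' c y : ℝ} (hF : HasDerivAt F F' y)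
    (h : ∀ y z, |F y - F z| ≤ c * |y - z|) : |F'| ≤ c := by
  simpa [coe_toNNReal c (nonneg_of_abs_sub_le_mul h)] using
    hF.le_of_lipschitz (LipschitzWith.of_dist_le' h)

theorem abs_sub_sub_sub_le {F F' : ℝ → ℝ} {K L δ y₀ y₁ z₀ z₁ : ℝ}
    (hF : ∀ y, HasDerivAt F (F' y) y) (hF'K : ∀ y, |F' y| ≤ K)
    (hF'L : ∀ y z, |F' y - F' z| ≤ L * |y - z|) (h₀ : |y₀ - z₀| ≤ δ) (h₁ : |y₁ - z₁| ≤ δ) :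
    |(F y₁ - F z₁) - (F y₀ - F z₀)| ≤ L * δ * |y₁ - y₀| + K * |(y₁ - z₁) - (y₀ - z₀)| := by
  set Y : ℝ → ℝ := fun r => y₀ + r * (y₁ - y₀)
  set Z : ℝ → ℝ := fun r => z₀ + r * (z₁ - z₀)
  have hline : ∀ (p q r : ℝ), HasDerivAt (fun r => p + r * (q - p)) (q - p) r := fun p q r => by
    simpa using ((hasDerivAt_id r).mul_const (q - p)).const_add p
  have hG : ∀ r ∈ Icc (0:ℝ) 1, HasDerivWithinAt (fun r => F (Y r) - F (Z r))
      (F' (Y r) * (y₁ - y₀) - F' (Z r) * (z₁ - z₀)) (Icc 0 1) r := fun r _ =>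
    (((hF _).comp r (hline y₀ y₁ r)).sub ((hF _).comp r (hline z₀ z₁ r))).hasDerivWithinAt
  have hYZ : ∀ r ∈ Icc (0:ℝ) 1, |Y r - Z r| ≤ δ := fun r hr => by
    calc |Y r - Z r| = |(1 - r) * (y₀ - z₀) + r * (y₁ - z₁)| := by
          simp only [Y, Z]; ring_nf
      _ ≤ (1 - r) * |y₀ - z₀| + r * |y₁ - z₁| := by
        refine (abs_add_le _ _).trans_eq ?_
        rw [abs_mul, abs_mul, abs_of_nonneg (sub_nonneg.2 hr.2), abs_of_nonneg hr.1]
      _ ≤ (1 - r) * δ + r * δ := by gcongr <;> linarith [hr.1, hr.2]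
      _ = δ := by ring
  have hbound : ∀ r ∈ Ico (0:ℝ) 1, ‖F' (Y r) * (y₁ - y₀) - F' (Z r) * (z₁ - z₀)‖
      ≤ L * δ * |y₁ - y₀| + K * |(y₁ - z₁) - (y₀ - z₀)| := fun r hr => by
    have hL := nonneg_of_abs_sub_le_mul hF'L
    calc ‖F' (Y r) * (y₁ - y₀) - F' (Z r) * (z₁ - z₀)‖
        = |(F' (Y r) - F' (Z r)) * (y₁ - y₀) + F' (Z r) * ((y₁ - z₁) - (y₀ - z₀))| := by
          rw [Real.norm_eq_abs]; ring_nf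
      _ ≤ |F' (Y r) - F' (Z r)| * |y₁ - y₀| + |F' (Z r)| * |(y₁ - z₁) - (y₀ - z₀)| := by
          rw [← abs_mul, ← abs_mul]; exact abs_add_le _ _
      _ ≤ L * δ * |y₁ - y₀| + K * |(y₁ - z₁) - (y₀ - z₀)| := by
          gcongr
          · exact (hF'L _ _).trans (by gcongr; exact hYZ r (Ico_subset_Icc_self hr))
          · exact hF'K _
  simpa [Y, Z] using norm_image_sub_le_of_norm_deriv_le_segment_01' hG hbound

theorem holderSemi_comp_sub_comp_le {F F' y z : ℝ → ℝ} {K L δ A B l a b : ℝ} (hab : a < b)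
    (hF : ∀ y, HasDerivAt F (F' y) y) (hF'K : ∀ y, |F' y| ≤ K)
    (hF'L : ∀ y z, |F' y - F' z| ≤ L * |y - z|) (hyz : ∀ t ∈ Icc a b, |y t - z t| ≤ δ)
    (hz : ∀ s t, a ≤ s → s < t → t ≤ b → |z t - z s| ≤ A * (t - s) ^ l)
    (hyz' : ∀ s t, a ≤ s → s < t → t ≤ b → |(y t - z t) - (y s - z s)| ≤ B * (t - s) ^ l) :
    holderSemi l a b (fun t => F (y t) - F (z t)) ≤ L * δ * (A + B) + K * B := by
  refine holderSemi_le hab fun s t hs hst htb => ?_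
  have hs' : s ∈ Icc a b := ⟨hs, hst.le.trans htb⟩
  have ht' : t ∈ Icc a b := ⟨hs.trans hst.le, htb⟩
  have hL : 0 ≤ L := nonneg_of_abs_sub_le_mul hF'L
  have hK : 0 ≤ K := (abs_nonneg _).trans (hF'K 0)
  have hδ : 0 ≤ δ := (abs_nonneg _).trans (hyz s hs')
  have hy : |y t - y s| ≤ (A + B) * (t - s) ^ l :=
    calc |y t - y s| = |(z t - z s) + ((y t - z t) - (y s - z s))| := by ring_nf
      _ ≤ A * (t - s) ^ l + B * (t - s) ^ l :=
        (abs_add_le _ _).trans (add_le_add (hz s t hs hst htb) (hyz' s t hs hst htb))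
      _ = (A + B) * (t - s) ^ l := by ring
  calc |(F (y t) - F (z t)) - (F (y s) - F (z s))|
      ≤ L * δ * |y t - y s| + K * |(y t - z t) - (y s - z s)| :=
        abs_sub_sub_sub_le hF hF'K hF'L (hyz s hs') (hyz t ht')
    _ ≤ L * δ * ((A + B) * (t - s) ^ l) + K * (B * (t - s) ^ l) := by
        gcongr
        exact hyz' s t hs hst htb
    _ = (L * δ * (A + B) + K * B) * (t - s) ^ l := by ring

theorem le_mul_exp_of_le_add_mul_integral {u : ℝ → ℝ} {a b c M : ℝ} (hc : 0 ≤ c)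
    (hu : ContinuousOn u (Icc a b)) (h : ∀ t ∈ Icc a b, u t ≤ M + c * ∫ s in a..t, u s) :
    ∀ t ∈ Icc a b, u t ≤ M * exp (c * (t - a)) := by
  intro t ht
  have hab : a ≤ b := ht.1.trans ht.2
  have hderiv : ∀ t ∈ Ico a b,
      HasDerivWithinAt (fun t => ∫ s in a..t, u s) (u t) (Ici t) t := by
    intro t ht
    have hnhds : Icc a b ∈ 𝓝[>] t := Icc_mem_nhdsGT_of_mem ht
    exact intervalIntegral.integral_hasDerivWithinAt_right
      ((hu.mono (Icc_subset_Icc_right ht.2.le)).intervalIntegrable_of_Icc ht.1)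
      ((hu.stronglyMeasurableAtFilter_nhdsWithin measurableSet_Icc t).filter_mono
        (nhdsWithin_le_of_mem hnhds))
      ((hu t (Ico_subset_Icc_self ht)).mono_of_mem_nhdsWithin hnhds)
  have hprim : ∫ s in a..t, u s ≤ gronwallBound 0 c M (t - a) := by
    refine le_gronwallBound_of_liminf_deriv_right_le ?_
      (fun t ht _ hr => (hderiv t ht).liminf_right_slope_le hr) (by simp)
      (fun t ht => by linarith [h t (Ico_subset_Icc_self ht)]) t ht
    simpa only [uIcc_of_le hab] using intervalIntegral.continuousOn_primitive_interval'
      (hu.intervalIntegrable_of_Icc hab) left_mem_uIcc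
  calc u t ≤ M + c * ∫ s in a..t, u s := h t ht
    _ ≤ M + c * gronwallBound 0 c M (t - a) := by gcongr
    _ = M * exp (c * (t - a)) := by
      rcases eq_or_ne c 0 with rfl | hc0
      · simp [gronwallBound_K0]
      · rw [gronwallBound_of_K_ne_0 hc0]; field_simp; ring

theorem abs_sub_le_of_eq_integral_add {y φ e : ℝ → ℝ} {K T s t : ℝ}
    (hφ : ContinuousOn φ (Icc 0 T)) (hy : ∀ t ∈ Icc 0 T, y t = (∫ u in 0..t, φ u) + e t)
    (hs : 0 ≤ s) (hst : s ≤ t) (ht : t ≤ T) (hK : ∀ u ∈ Icc s t, |φ u| ≤ K) :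
    |y t - y s| ≤ K * (t - s) + |e t - e s| := by
  have hint : ∀ r ∈ Icc 0 T, IntervalIntegrable φ volume 0 r := fun r hr =>
    (hφ.mono (Icc_subset_Icc_right hr.2)).intervalIntegrable_of_Icc hr.1
  have hs' : s ∈ Icc 0 T := ⟨hs, hst.trans ht⟩
  have ht' : t ∈ Icc 0 T := ⟨hs.trans hst, ht⟩
  have hincr : y t - y s = (∫ u in s..t, φ u) + (e t - e s) := by
    rw [hy t ht', hy s hs', ← intervalIntegral.integral_interval_sub_left (hint t ht') (hint s hs')]
    ring
  have hφint : ‖∫ u in s..t, φ u‖ ≤ K * |t - s| :=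
    intervalIntegral.norm_integral_le_of_norm_le_const fun u hu =>
      hK u (Ioc_subset_Icc_self (uIoc_of_le hst ▸ hu))
  rw [hincr, ← abs_of_nonneg (sub_nonneg.2 hst)]
  exact (abs_add_le _ _).trans (add_le_add hφint le_rfl)


theorem sub_eq_integral_sub_add {b X x e : ℝ → ℝ} {x0 T : ℝ} (hb : Continuous b)
    (hXc : ContinuousOn X (Icc 0 T)) (hxc : ContinuousOn x (Icc 0 T))
    (hX : ∀ t ∈ Icc 0 T, X t = x0 + (∫ s in 0..t, b (X s)) + e t)
    (hx : ∀ t ∈ Icc 0 T, x t = x0 + ∫ s in 0..t, b (x s)) :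
    ∀ t ∈ Icc 0 T, X t - x t = (∫ s in 0..t, (b (X s) - b (x s))) + e t := fun t ht => by
  have hint : ∀ {u : ℝ → ℝ}, ContinuousOn u (Icc 0 T) →
      IntervalIntegrable (fun s => b (u s)) volume 0 t := fun hu =>
    ((hb.comp_continuousOn hu).mono (Icc_subset_Icc_right ht.2)).intervalIntegrable_of_Icc ht.1
  rw [hX t ht, hx t ht, intervalIntegral.integral_sub (hint hXc) (hint hxc)]
  ring

theorem abs_sub_le_mul_exp {b X x e : ℝ → ℝ} {c x0 T M : ℝ}
    (hb : ∀ y z, |b y - b z| ≤ c * |y - z|)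
    (hXc : ContinuousOn X (Icc 0 T)) (hxc : ContinuousOn x (Icc 0 T))
    (hX : ∀ t ∈ Icc 0 T, X t = x0 + (∫ s in 0..t, b (X s)) + e t)
    (hx : ∀ t ∈ Icc 0 T, x t = x0 + ∫ s in 0..t, b (x s))
    (he : ∀ t ∈ Icc 0 T, |e t| ≤ M) :
    ∀ t ∈ Icc 0 T, |X t - x t| ≤ M * exp (c * T) := by
  have hc := nonneg_of_abs_sub_le_mul hb
  have hbc : Continuous b := (LipschitzWith.of_dist_le' hb).continuous
  have hD := sub_eq_integral_sub_add hbc hXc hxc hX hx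
  have hint : ∀ t ∈ Icc 0 T, ∀ {u : ℝ → ℝ}, ContinuousOn u (Icc 0 T) →
      IntervalIntegrable u volume 0 t := fun t ht _ hu =>
    (hu.mono (Icc_subset_Icc_right ht.2)).intervalIntegrable_of_Icc ht.1
  have hgronwall := le_mul_exp_of_le_add_mul_integral hc ((hXc.sub hxc).abs) fun t ht => by
    calc |X t - x t| ≤ |∫ s in 0..t, (b (X s) - b (x s))| + |e t| := by
          rw [hD t ht]; exact abs_add_le _ _
      _ ≤ (∫ s in 0..t, |b (X s) - b (x s)|) + M :=
          add_le_add (intervalIntegral.abs_integral_le_integral_abs ht.1) (he t ht)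
      _ ≤ (∫ s in 0..t, c * |X s - x s|) + M := by
          gcongr
          refine intervalIntegral.integral_mono_on ht.1 (hint t ht ?_) (hint t ht ?_)
            fun s _ => hb _ _
          · exact ((hbc.comp_continuousOn hXc).sub (hbc.comp_continuousOn hxc)).abs
          · exact ((hXc.sub hxc).abs).const_smul c
      _ = M + c * ∫ s in 0..t, |X s - x s| := by
          rw [intervalIntegral.integral_const_mul, add_comm]
  intro t ht
  have hM : 0 ≤ M := (abs_nonneg _).trans (he t ht)
  calc |X t - x t| ≤ M * exp (c * (t - 0)) := hgronwall t ht
    _ ≤ M * exp (c * T) := by gcongr; linarith [ht.2]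

theorem abs_sub_le_mul_rpow_of_eq_integral {φ y : ℝ → ℝ} {y0 K T l s t : ℝ}
    (hφ : ContinuousOn φ (Icc 0 T)) (hy : ∀ t ∈ Icc 0 T, y t = y0 + ∫ u in 0..t, φ u)
    (hK : ∀ u ∈ Icc 0 T, |φ u| ≤ K) (hl : l ≤ 1) (hs : 0 ≤ s) (hst : s ≤ t) (ht : t ≤ T) :
    |y t - y s| ≤ K * T ^ (1 - l) * (t - s) ^ l := by
  have hincr := abs_sub_le_of_eq_integral_add (e := fun _ => y0) hφ
    (fun t ht => (hy t ht).trans (add_comm _ _)) hs hst ht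
    (fun u hu => hK u ⟨hs.trans hu.1, hu.2.trans ht⟩)
  rw [sub_self, abs_zero, add_zero] at hincr
  have hK0 : 0 ≤ K := (abs_nonneg _).trans (hK s ⟨hs, hst.trans ht⟩)
  exact hincr.trans (mul_le_mul_rpow_one_sub_mul_rpow hK0 (sub_nonneg.2 hst) (by linarith) hl)

theorem abs_sub_sub_sub_le_mul_rpow {b X x g : ℝ → ℝ} {c x0 T δ ε C l s t : ℝ}
    (hb : ∀ y z, |b y - b z| ≤ c * |y - z|)
    (hXc : ContinuousOn X (Icc 0 T)) (hxc : ContinuousOn x (Icc 0 T))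
    (hX : ∀ t ∈ Icc 0 T, X t = x0 + (∫ s in 0..t, b (X s)) + ε * g t)
    (hx : ∀ t ∈ Icc 0 T, x t = x0 + ∫ s in 0..t, b (x s))
    (hXx : ∀ t ∈ Icc 0 T, |X t - x t| ≤ ε * δ)
    (hg : ∀ s ∈ Icc 0 T, ∀ t ∈ Icc 0 T, |g t - g s| ≤ C * |t - s| ^ l) (hε : 0 ≤ ε)
    (hl : l ≤ 1) (hs : 0 ≤ s) (hst : s ≤ t) (ht : t ≤ T) :
    |(X t - x t) - (X s - x s)| ≤ ε * (c * δ * T ^ (1 - l) + C) * (t - s) ^ l := by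
  have hc := nonneg_of_abs_sub_le_mul hb
  have hbc : Continuous b := (LipschitzWith.of_dist_le' hb).continuous
  have hs' : s ∈ Icc 0 T := ⟨hs, hst.trans ht⟩
  have hεδ : 0 ≤ ε * δ := (abs_nonneg _).trans (hXx s hs')
  have hincr := abs_sub_le_of_eq_integral_add
    ((hbc.comp_continuousOn hXc).sub (hbc.comp_continuousOn hxc))
    (sub_eq_integral_sub_add hbc hXc hxc hX hx) hs hst ht fun u hu =>
      (hb _ _).trans (mul_le_mul_of_nonneg_left (hXx u ⟨hs.trans hu.1, hu.2.trans ht⟩) hc)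
  have hgincr := hg s hs' t ⟨hs.trans hst, ht⟩
  rw [abs_of_nonneg (sub_nonneg.2 hst)] at hgincr
  calc |(X t - x t) - (X s - x s)| ≤ c * (ε * δ) * (t - s) + ε * |g t - g s| := by
        rwa [← mul_sub, abs_mul, abs_of_nonneg hε] at hincr
    _ ≤ c * (ε * δ) * T ^ (1 - l) * (t - s) ^ l + ε * (C * (t - s) ^ l) :=
        add_le_add (mul_le_mul_rpow_one_sub_mul_rpow (mul_nonneg hc hεδ) (sub_nonneg.2 hst)
          (by linarith) hl) (mul_le_mul_of_nonneg_left hgincr hε)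
    _ = ε * (c * δ * T ^ (1 - l) + C) * (t - s) ^ l := by ring

theorem tendsto_iSup_nhdsGT_zero_of_le_mul {ι : Type*} {F : ℝ → ι → ℝ} {K : ℝ}
    (h0 : ∀ ε i, 0 ≤ F ε i) (hK : ∀ ε ∈ Ioc (0:ℝ) 1, ∀ i, F ε i ≤ ε * K) :
    Tendsto (fun ε => ⨆ i, F ε i) (𝓝[>] 0) (𝓝 0) := by
  refine squeeze_zero' (g := fun ε => ε * |K|)
    (Eventually.of_forall fun ε => Real.iSup_nonneg (h0 ε)) ?_ ?_
  · filter_upwards [Ioc_mem_nhdsGT zero_lt_one] with ε hε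
    exact Real.iSup_le (fun i => (hK ε hε i).trans (by gcongr; exacts [hε.1.le, le_abs_self K]))
      (mul_nonneg hε.1.le (abs_nonneg K))
  · exact ((continuous_id.mul continuous_const).tendsto' 0 0 (zero_mul _)).mono_left
      nhdsWithin_le_nhds

theorem holder_seminorm_convergence_general {Θ : Type*} (H lam T c x0 Cg : ℝ)
    (hH1 : H < 1) (hlam : lam ∈ Set.Ioo (1/2 : ℝ) H)
    (hT : 0 < T)
    (f f' : ℝ → Θ → ℝ)
    (hderiv : ∀ (θ : Θ) (y : ℝ), HasDerivAt (fun z => f z θ) (f' y θ) y)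
    (hfL : ∀ (θ : Θ) (y z : ℝ), |f y θ - f z θ| ≤ c * |y - z|)
    (hf'L : ∀ (θ : Θ) (y z : ℝ), |f' y θ - f' z θ| ≤ c * |y - z|)
    (b : ℝ → ℝ)
    (hbL : ∀ y z : ℝ, |b y - b z| ≤ c * |y - z|)
    (g : ℝ → ℝ)
    (hg : ∀ s ∈ Set.Icc (0:ℝ) T, ∀ t ∈ Set.Icc (0:ℝ) T, |g t - g s| ≤ Cg * |t - s| ^ lam)
    (x : ℝ → ℝ) (hxc : ContinuousOn x (Set.Icc 0 T))
    (hx : ∀ t ∈ Set.Icc (0:ℝ) T, x t = x0 + ∫ s in (0:ℝ)..t, b (x s))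
    (X : ℝ → ℝ → ℝ) (hXc : ∀ ε, ContinuousOn (X ε) (Set.Icc 0 T))
    (hX : ∀ ε > (0:ℝ), ∀ t ∈ Set.Icc (0:ℝ) T,
      X ε t = x0 + (∫ s in (0:ℝ)..t, b (X ε s)) + ε * g t) :
    Tendsto (fun ε => ⨆ θ : Θ, holderSemi lam 0 T (fun t => f (X ε t) θ - f (x t) θ))
      (nhdsWithin 0 (Set.Ioi 0)) (nhds 0) := by
  have hlam0 : 0 ≤ lam := by linarith [hlam.1]
  have hlam1 : lam ≤ 1 := by linarith [hlam.2]
  have hc : 0 ≤ c := nonneg_of_abs_sub_le_mul hbL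
  have hbc : Continuous b := (LipschitzWith.of_dist_le' hbL).continuous
  have hCg : 0 ≤ Cg := by
    have hgT := (abs_nonneg _).trans (hg 0 ⟨le_rfl, hT.le⟩ T ⟨hT.le, le_rfl⟩)
    exact nonneg_of_mul_nonneg_left hgT (by rw [sub_zero, abs_of_pos hT]; positivity)
  obtain ⟨Mb, hMb⟩ := isCompact_Icc.exists_bound_of_continuousOn (hbc.comp_continuousOn hxc)
  set δ := (|g 0| + Cg * T ^ lam) * exp (c * T)
  have hδ : 0 ≤ δ :=
    mul_nonneg (add_nonneg (abs_nonneg _) (mul_nonneg hCg (rpow_nonneg hT.le _))) (exp_pos _).le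
  set τ := T ^ (1 - lam)
  have hXx : ∀ ε > 0, ∀ t ∈ Icc 0 T, |X ε t - x t| ≤ ε * δ := fun ε hε t ht => by
    refine (abs_sub_le_mul_exp (M := ε * (|g 0| + Cg * T ^ lam)) hbL (hXc ε) hxc (hX ε hε) hx
      (fun t ht => ?_) t ht).trans_eq (by ring)
    rw [abs_mul, abs_of_pos hε]
    exact mul_le_mul_of_nonneg_left (abs_le_add_mul_rpow_of_holder hCg hlam0 hg t ht) hε.le
  have hB : 0 ≤ c * δ * τ + Cg := by positivity
  refine tendsto_iSup_nhdsGT_zero_of_le_mul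
    (K := c * δ * (Mb * τ + (c * δ * τ + Cg)) + c * (c * δ * τ + Cg))
    (fun ε θ => holderSemi_nonneg _ _ _ _) fun ε hε θ => ?_
  refine (holderSemi_comp_sub_comp_le (F' := fun y => f' y θ) hT (hderiv θ)
    (fun y => abs_le_of_hasDerivAt_of_abs_sub_le (hderiv θ y) (hfL θ)) (hf'L θ) (hXx ε hε.1)
    (fun s t hs hst ht => abs_sub_le_mul_rpow_of_eq_integral (hbc.comp_continuousOn hxc) hx hMb
      hlam1 hs hst.le ht)
    (fun s t hs hst ht => abs_sub_sub_sub_le_mul_rpow hbL (hXc ε) hxc (hX ε hε.1) hx (hXx ε hε.1)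
      hg hε.1.le hlam1 hs hst.le ht)).trans ?_
  -- `ε ≤ 1` absorbs the `ε ^ 2` term coming from `|ΔX ε| ≤ |Δx| + |Δ(X ε - x)|`.
  nlinarith [mul_nonneg (mul_nonneg (mul_nonneg hc hδ) hB) (mul_nonneg hε.1.le (sub_nonneg.2 hε.2))]

/-- Hölder-norm control of the composed difference (key step of Lemma 8):
`sup_θ ‖f(X^ε_·,θ) - f(x_·,θ)‖_{λ;[0,T]} → 0` as `ε ↓ 0`. -/
theorem holder_seminorm_convergence {Θ : Type*} (H lam T c x0 Cg : ℝ)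
    (hH : 1 / 2 < H) (hH1 : H < 1) (hlam : lam ∈ Set.Ioo (1/2 : ℝ) H)
    (hT : 0 < T) (hc : 0 < c)
    (f f' : ℝ → Θ → ℝ)
    (hderiv : ∀ (θ : Θ) (y : ℝ), HasDerivAt (fun z => f z θ) (f' y θ) y)
    (hfL : ∀ (θ : Θ) (y z : ℝ), |f y θ - f z θ| ≤ c * |y - z|)
    (hf'L : ∀ (θ : Θ) (y z : ℝ), |f' y θ - f' z θ| ≤ c * |y - z|)
    (b : ℝ → ℝ)
    (hbL : ∀ y z : ℝ, |b y - b z| ≤ c * |y - z|)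
    (hbG : ∀ y : ℝ, |b y| ≤ c * (1 + |y|))
    (g : ℝ → ℝ)
    (hg : ∀ s ∈ Set.Icc (0:ℝ) T, ∀ t ∈ Set.Icc (0:ℝ) T, |g t - g s| ≤ Cg * |t - s| ^ lam)
    (x : ℝ → ℝ) (hxc : ContinuousOn x (Set.Icc 0 T))
    (hx : ∀ t ∈ Set.Icc (0:ℝ) T, x t = x0 + ∫ s in (0:ℝ)..t, b (x s))
    (X : ℝ → ℝ → ℝ) (hXc : ∀ ε, ContinuousOn (X ε) (Set.Icc 0 T))
    (hX : ∀ ε > (0:ℝ), ∀ t ∈ Set.Icc (0:ℝ) T,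
      X ε t = x0 + (∫ s in (0:ℝ)..t, b (X ε s)) + ε * g t) :
    Tendsto (fun ε => ⨆ θ : Θ, holderSemi lam 0 T (fun t => f (X ε t) θ - f (x t) θ))
      (nhdsWithin 0 (Set.Ioi 0)) (nhds 0) :=
  holder_seminorm_convergence_general H lam T c x0 Cg hH1 hlam hT f f' hderiv hfL hf'L b hbL g hg x
    hxc hx X hXc hX
end
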